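/- arXiv:1107.4169 — 3 statements merged into one kernel-verified Lean document; each statement's English description precedes it below -/
import Mathlib

section
/- A word with letters in [n] has partition content (the number of occurrences of j is weakly decreasing in j) if and only if at each stage of the Lascoux–Schützenberger selection algorithm, for every letter j+1 remaining after removing previously selected cycles there is a selectable copy, i.e., the algorithm terminates with the empty word. Equivalently: the selection algorithm applied to a word of partition content always succeeds, extracting in each round a sequence 1,2,...,k for some k, and after all rounds the word is empty. -/
/-! The Lascoux–Schützenberger charge algorithm. -/
namespace LS

/-- Largest index `i < pos` with `w[i] = x`. -/
def lastIdxBefore (w : List ℕ) (x pos : ℕ) : Option ℕ :=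
  ((List.range pos).filter (fun i => w.getD i 0 == x)).getLast?

/-- Largest index `i` with `w[i] = x`. -/
def lastIdx (w : List ℕ) (x : ℕ) : Option ℕ :=
  ((List.range w.length).filter (fun i => w.getD i 0 == x)).getLast?

/-- One round of the selection algorithm: starting from target `j` at position `pos`,
select `j+1, j+2, ...`; record selected indices and the values `j` at which a wrap
(re-scan from the right end) occurred.  Returns `(k, selected, wraps)`. -/
def roundGo (w : List ℕ) : ℕ → ℕ → ℕ → List ℕ → List ℕ → ℕ × List ℕ × List ℕ
  | 0, j, _, sel, wraps => (j, sel, wraps)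
  | fuel+1, j, pos, sel, wraps =>
    match lastIdxBefore w (j+1) pos with
    | some i => roundGo w fuel (j+1) i (i :: sel) wraps
    | none =>
      match lastIdx w (j+1) with
      | some i => roundGo w fuel (j+1) i (i :: sel) (j :: wraps)
      | none => (j, sel, wraps)

/-- One full round: its charge contribution `Σ (k - j)` over wraps, and the word
with the selected letters removed. -/
def roundA (w : List ℕ) : ℕ × List ℕ :=
  match lastIdx w 1 with
  | none => (0, w)
  | some i0 =>
    let r := roundGo w w.length 1 i0 [i0] []
    (r.2.2.foldl (fun s j => s + (r.1 - j)) 0,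
     ((List.range w.length).filter (fun t => !(r.2.1.contains t))).map (fun t => w.getD t 0))

def chargeGo : ℕ → List ℕ → ℕ
  | 0, _ => 0
  | fuel+1, w => if w.isEmpty then 0 else (roundA w).1 + chargeGo fuel (roundA w).2

/-- The Lascoux–Schützenberger charge of a word. -/
def charge (w : List ℕ) : ℕ := chargeGo w.length w

/-- Repeatedly apply rounds of the selection algorithm, removing selected letters. -/
def runRounds : ℕ → List ℕ → List ℕ
  | 0, w => w
  | fuel+1, w => if w.isEmpty then [] else runRounds fuel (roundA w).2

end LS

/-!
A round of the selection algorithm only stops when the next letter is absent, so it removes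
exactly one copy of each of `1, …, k` for some `k` with `k + 1` absent from the word. Such a
removal preserves each inequality `#(j + 2) ≤ #(j + 1)` and each violation of it: for
`j + 2 ≤ k` both counts drop by one, for `j + 1 = k` both sides have `#(k + 1) = 0`, and above
`k` nothing changes. Hence a violation of partition content survives every round and the word
never empties. Conversely, in a nonempty word with partition content and positive letters the
letter `1` occurs, so every round removes at least one letter and `length w` rounds suffice.
-/

namespace LS

open scoped List

section Positions

variable {α : Type*}

theorem map_getD_range_length (w : List α) (d : α) :
    (List.range w.length).map (w.getD · d) = w := by
  apply List.ext_getElem (by simp)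
  intro i _ hi
  simp [List.getD_eq_getElem?_getD, List.getElem?_eq_getElem hi]

theorem filter_map_getD_append_perm (w : List α) (d : α) {s : List ℕ} (hs : s.Nodup)
    (hsw : ∀ i ∈ s, i < w.length) :
    ((List.range w.length).filter (fun t => !(s.contains t))).map (w.getD · d)
      ++ s.map (w.getD · d) ~ w := by
  have hfilter : (List.range w.length).filter (fun t => s.contains t) ~ s := by
    refine List.perm_of_nodup_nodup_toFinset_eq (List.nodup_range.filter _) hs ?_
    ext t
    simpa using fun ht => hsw t ht
  calc _ ~ ((List.range w.length).filter (fun t => !(s.contains t))).map (w.getD · d)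
        ++ ((List.range w.length).filter (fun t => s.contains t)).map (w.getD · d) :=
        (hfilter.map _).symm.append_left _
    _ ~ (List.range w.length).map (w.getD · d) := by
        rw [← List.map_append]
        exact (List.perm_append_comm.trans (List.filter_append_perm _ _)).map _
    _ = w := map_getD_range_length w d

end Positions

variable {w : List ℕ}

theorem lastIdx_eq_none_iff {x : ℕ} : lastIdx w x = none ↔ x ∉ w := by
  rw [lastIdx, List.getLast?_eq_none_iff, List.filter_eq_nil_iff, List.mem_iff_getElem]
  simp +contextual

theorem lastIdx_spec {x i : ℕ} (h : lastIdx w x = some i) : i < w.length ∧ w.getD i 0 = x := by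
  simpa using List.mem_of_mem_getLast? h

theorem lastIdxBefore_spec {x pos i : ℕ} (h : lastIdxBefore w x pos = some i) :
    i < pos ∧ w.getD i 0 = x := by
  simpa using List.mem_of_mem_getLast? h

theorem roundGo_succ_cases (fuel j pos : ℕ) (sel wraps : List ℕ) (hpos : pos ≤ w.length) :
    (j + 1 ∉ w ∧ roundGo w (fuel + 1) j pos sel wraps = (j, sel, wraps)) ∨
      ∃ i wraps', i < w.length ∧ w.getD i 0 = j + 1 ∧
        roundGo w (fuel + 1) j pos sel wraps = roundGo w fuel (j + 1) i (i :: sel) wraps' := by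
  rcases hbefore : lastIdxBefore w (j + 1) pos with _ | i
  · rcases hlast : lastIdx w (j + 1) with _ | i
    · exact .inl ⟨lastIdx_eq_none_iff.mp hlast, by simp [roundGo, hbefore, hlast]⟩
    · exact .inr ⟨i, j :: wraps, (lastIdx_spec hlast).1, (lastIdx_spec hlast).2,
        by simp [roundGo, hbefore, hlast]⟩
  · obtain ⟨hi, hwi⟩ := lastIdxBefore_spec hbefore
    exact .inr ⟨i, wraps, by omega, hwi, by simp [roundGo, hbefore]⟩

theorem roundGo_spec (fuel j pos : ℕ) (sel wraps : List ℕ) (hpos : pos ≤ w.length) :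
    ∃ m L, (roundGo w fuel j pos sel wraps).1 = j + m ∧
      (roundGo w fuel j pos sel wraps).2.1 = L ++ sel ∧
      L.map (w.getD · 0) = (List.range' (j + 1) m).reverse ∧
      (∀ i ∈ L, i < w.length) ∧ (m < fuel → j + m + 1 ∉ w) := by
  induction fuel generalizing j pos sel wraps with
  | zero => exact ⟨0, [], by simp [roundGo]⟩
  | succ fuel ih =>
    rcases roundGo_succ_cases fuel j pos sel wraps hpos with ⟨hj, hstop⟩ | ⟨i, wraps', hi, hwi, hstep⟩
    · exact ⟨0, [], by simp [hstop, hj]⟩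
    · obtain ⟨m, L, hk, hsel, hmap, hL, hend⟩ := ih (j + 1) i (i :: sel) wraps' hi.le
      refine ⟨m + 1, L ++ [i], by rw [hstep, hk]; omega, by simp [hstep, hsel], ?_, ?_, ?_⟩
      · rw [List.map_append, hmap, List.range'_succ, List.reverse_cons]
        simp only [List.map_cons, List.map_nil, hwi]
      · simpa [or_imp, forall_and, hi] using hL
      · intro hm
        convert hend (by omega) using 2
        omega

theorem exists_roundA_append_range'_perm (w : List ℕ) :
    ∃ k, k + 1 ∉ w ∧ (1 ∈ w → 1 ≤ k) ∧ (roundA w).2 ++ List.range' 1 k ~ w := by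
  by_cases h1 : 1 ∈ w
  swap
  · exact ⟨0, h1, by simp [h1], by simp [roundA, lastIdx_eq_none_iff.mpr h1]⟩
  obtain ⟨i0, hlast⟩ := Option.ne_none_iff_exists'.mp (by rwa [Ne, lastIdx_eq_none_iff, not_not])
  obtain ⟨hi0, hwi0⟩ := lastIdx_spec hlast
  obtain ⟨m, L, -, hsel, hmap, hL, hend⟩ := roundGo_spec w.length 1 i0 [i0] [] hi0.le
  have hselmap : (L ++ [i0]).map (w.getD · 0) = (List.range' 1 (m + 1)).reverse := by
    rw [List.map_append, hmap, List.range'_succ, List.reverse_cons]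
    simp only [List.map_cons, List.map_nil, hwi0]
  have hnodup : (L ++ [i0]).Nodup :=
    .of_map _ (hselmap ▸ List.nodup_reverse.mpr List.nodup_range')
  have hsw : ∀ i ∈ L ++ [i0], i < w.length := by
    simpa [or_imp, forall_and, hi0] using hL
  have hperm := filter_map_getD_append_perm w 0 hnodup hsw
  rw [hselmap, ← hsel] at hperm
  have hround : (roundA w).2 ++ List.range' 1 (m + 1) ~ w := by
    simp only [roundA, hlast]
    exact ((List.reverse_perm _).symm.append_left _).trans hperm
  have hm : m < w.length := by
    have hlen := hround.length_eq
    simp only [List.length_append, List.length_range'] at hlen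
    omega
  exact ⟨m + 1, by simpa [add_comm] using hend hm, fun _ => by omega, hround⟩

theorem count_le_count_iff_of_append_range'_perm {u w : List ℕ} {k : ℕ}
    (h : u ++ List.range' 1 k ~ w) (hk : k + 1 ∉ w) (j : ℕ) :
    u.count (j + 2) ≤ u.count (j + 1) ↔ w.count (j + 2) ≤ w.count (j + 1) := by
  have hcount (x : ℕ) : w.count x = u.count x + if 1 ≤ x ∧ x < 1 + k then 1 else 0 := by
    rw [← h.count_eq, List.count_append, List.count_range_1']
  -- At `j + 1 = k` both sides hold because `k + 1` is absent; otherwise the counts of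
  -- `j + 1` and `j + 2` drop by the same amount.
  have hk0 : j + 1 = k → w.count (j + 2) = 0 := by
    rintro rfl
    exact List.count_eq_zero.mpr hk
  have hj1 := hcount (j + 1)
  have hj2 := hcount (j + 2)
  split_ifs at * <;> omega

theorem count_roundA_le_iff (w : List ℕ) (j : ℕ) :
    (roundA w).2.count (j + 2) ≤ (roundA w).2.count (j + 1) ↔
      w.count (j + 2) ≤ w.count (j + 1) := by
  obtain ⟨k, hk, -, hperm⟩ := exists_roundA_append_range'_perm w
  exact count_le_count_iff_of_append_range'_perm hperm hk j

theorem count_runRounds_le_iff (fuel : ℕ) (w : List ℕ) (j : ℕ) :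
    (runRounds fuel w).count (j + 2) ≤ (runRounds fuel w).count (j + 1) ↔
      w.count (j + 2) ≤ w.count (j + 1) := by
  induction fuel generalizing w with
  | zero => rfl
  | succ fuel ih =>
    by_cases hw : w = []
    · simp [runRounds, hw]
    · rw [runRounds, if_neg (by simpa using hw), ih, count_roundA_le_iff]

theorem one_mem_of_count_succ_le (hpos : ∀ x ∈ w, 1 ≤ x)
    (hpc : ∀ j, w.count (j + 2) ≤ w.count (j + 1)) (hw : w ≠ []) : 1 ∈ w := by
  obtain ⟨x, hx⟩ := List.exists_mem_of_ne_nil w hw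
  have hanti : Antitone fun m => w.count (m + 1) := antitone_nat_of_succ_le hpc
  have hle : w.count x ≤ w.count 1 := by
    simpa [Nat.sub_add_cancel (hpos x hx)] using hanti (Nat.zero_le (x - 1))
  exact List.count_pos_iff.mp (lt_of_lt_of_le (List.count_pos_iff.mpr hx) hle)

theorem runRounds_eq_nil_of_count_succ_le {fuel : ℕ} (hlen : w.length ≤ fuel)
    (hpos : ∀ x ∈ w, 1 ≤ x) (hpc : ∀ j, w.count (j + 2) ≤ w.count (j + 1)) :
    runRounds fuel w = [] := by
  induction fuel generalizing w with
  | zero => simpa [runRounds] using hlen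
  | succ fuel ih =>
    by_cases hw : w = []
    · simp [runRounds, hw]
    rw [runRounds, if_neg (by simpa using hw)]
    obtain ⟨k, hk, hk_pos, hperm⟩ := exists_roundA_append_range'_perm w
    have hk1 := hk_pos (one_mem_of_count_succ_le hpos hpc hw)
    refine ih ?_ (fun x hx => hpos x (hperm.subset (List.mem_append_left _ hx)))
      (fun j => (count_le_count_iff_of_append_range'_perm hperm hk j).mpr (hpc j))
    have hlen' := hperm.length_eq
    simp only [List.length_append, List.length_range'] at hlen'
    omega

end LS

/-- A word with letters in `[n]` has partition content (the number of
occurrences of `j` is weakly decreasing in `j`) if and only if the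
Lascoux–Schützenberger selection algorithm terminates with the empty word. -/
theorem partition_content_iff_selection_succeeds (n : ℕ) (w : List ℕ)
    (hw : ∀ x ∈ w, 1 ≤ x ∧ x ≤ n) :
    (∀ j : ℕ, w.count (j+2) ≤ w.count (j+1)) ↔ LS.runRounds w.length w = [] := by
  refine ⟨LS.runRounds_eq_nil_of_count_succ_le le_rfl fun x hx => (hw x hx).1, fun hrun j => ?_⟩
  exact (LS.count_runRounds_le_iff w.length w j).mp (by simp [hrun])
end

section
/- Let b be a column-strict strictly increasing column of height k with entries in the ordered alphabet [n̄] = {1<2<...<n<n̄<...<1̄}. Then b satisfies the Kashiwara–Nakashima condition (for every z with both z and z̄ occurring in b at positions p<q respectively, one has q−p > k−z) if and only if b can be split in the sense of Definition of split columns; in particular, if b is a KN column, the set J = {t_1 > ... > t_r} in the splitting procedure exists and is unique. -/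
/-! Circular reordering (Algorithm 3.2), descents, arms, and the charge word. -/
namespace CO

/-- Position of `x` in the circular order `≺ᵢ` on the alphabet `{1,...,n}`. -/
def circKey (n i x : ℕ) : ℕ := (x + n - i) % n

/-- Minimum of a list w.r.t. the circular order `≺ᵢ`. -/
def circMin (n i : ℕ) (l : List ℕ) : ℕ :=
  l.foldl (fun acc x => if circKey n i x < circKey n i acc then x else acc) (l.headD 0)

/-- Reorder the column `rem` against the previous column `prev`:
entry `i` is the `≺_{prev(i)}`-minimum of the remaining entries. -/
def reorderCol (n : ℕ) : List ℕ → List ℕ → List ℕ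
  | [], _ => []
  | _ :: _, [] => []
  | p :: prev', rem =>
    let m := circMin n p rem
    m :: reorderCol n prev' (rem.erase m)

def circOrdGo (n : ℕ) (prev : List ℕ) : List (List ℕ) → List (List ℕ)
  | [] => []
  | bj :: rest =>
    let cj := reorderCol n prev bj
    cj :: circOrdGo n cj rest

/-- Algorithm 3.2: `circ-ord`, applied to a list of columns over the alphabet `{1,...,n}`. -/
def circOrd (n : ℕ) : List (List ℕ) → List (List ℕ)
  | [] => []
  | b1 :: rest => b1 :: circOrdGo n b1 rest

/-- Arm length of the cell in column `j` (0-indexed), row `i` of the filling `c`. -/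
def arm (c : List (List ℕ)) (j i : ℕ) : ℕ :=
  ((List.range c.length).filter (fun l => decide (j < l) && decide (i < (c.getD l []).length))).length

/-- The sum of arm lengths over all descents of the filling `c`
(a descent is a cell with `c_j(i) > c_{j+1}(i)`). -/
def armSum (c : List (List ℕ)) : ℕ :=
  (List.range c.length).foldl (fun s j =>
    s + ((List.range ((c.getD (j+1) []).length)).foldl (fun t i =>
      t + if (c.getD (j+1) []).getD i 0 < (c.getD j []).getD i 0 then arm c j i else 0) 0)) 0

def insertBL (p : ℕ × ℕ) : List (ℕ × ℕ) → List (ℕ × ℕ)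
  | [] => [p]
  | q :: l => if p.1 > q.1 ∨ (p.1 = q.1 ∧ p.2 ≥ q.2) then p :: q :: l else q :: insertBL p l

/-- Sort biletters by decreasing upper letter, then decreasing lower letter. -/
def sortBL (l : List (ℕ × ℕ)) : List (ℕ × ℕ) := l.foldr insertBL []

/-- The word `cw₂(b)` of lower letters of the charge word of the filling `b`. -/
def cw2 (b : List (List ℕ)) : List ℕ :=
  (sortBL (((List.range b.length).map (fun j => (b.getD j []).map (fun k => (k, j+1)))).flatten)).map Prod.snd

end CO

/-! Generic tensor-product crystal combinatorics (signature rule), with the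
convention of the paper: `f` acts on the left factor iff `ε(b₁) ≥ φ(b₂)`. -/
namespace Cry

variable {K : Type*}

def phiT (eps phi : K → ℕ) : List K → ℕ
  | [] => 0
  | x :: r => phi x + (phiT eps phi r - eps x)

def epsT (eps phi : K → ℕ) : List K → ℕ
  | [] => 0
  | x :: r => epsT eps phi r + (eps x - phiT eps phi r)

/-- The raising operator on a tensor product (list) of atoms. -/
def eT (eps phi : K → ℕ) (eA : K → K) : List K → List K
  | [] => []
  | x :: r => if phiT eps phi r < eps x then eA x :: r else x :: eT eps phi eA r

/-- The lowering operator on a tensor product (list) of atoms. -/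
def fT (eps phi : K → ℕ) (fA : K → K) : List K → List K
  | [] => []
  | x :: r => if phiT eps phi r ≤ eps x then fA x :: r else x :: fT eps phi fA r

end Cry

/-! Type `C_n` Kashiwara–Nakashima columns, encoded over the alphabet `{1,...,2n}`
where the barred letter `z̄` is encoded as `2n+1-z`. -/
namespace TC

def insSorted : ℕ → List ℕ → List ℕ
  | x, [] => [x]
  | x, y :: l => if x ≤ y then x :: y :: l else y :: insSorted x l

def sortList (l : List ℕ) : List ℕ := l.foldr insSorted []

/-- The KN condition (Definition 2.1): a strictly increasing column with entries in
`{1,...,2n}` such that a pair `(z, z̄)` at positions `p < q` satisfies `q - p > k - z`. -/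
def IsKN (n : ℕ) (b : List ℕ) : Prop :=
  b.Chain' (· < ·) ∧ (∀ x ∈ b, 1 ≤ x ∧ x ≤ 2*n) ∧
  ∀ p q, p < q → q < b.length → b.getD p 0 ≤ n → b.getD q 0 = 2*n+1 - b.getD p 0 →
    b.length - b.getD p 0 < q - p

/-- The decreasing list `I = {z_1 > ... > z_r}` of unbarred letters `z`
such that both `z` and `z̄` occur in `b`. -/
def Icompute (n : ℕ) (b : List ℕ) : List ℕ :=
  (((List.range n).map (· + 1)).filter (fun z => b.contains z && b.contains (2*n+1-z))).reverse

/-- Greatest `t` with `1 ≤ t < bound`, `t ∉ b`, `t̄ ∉ b` (or `0` if none exists). -/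
def findT (n : ℕ) (b : List ℕ) (bound : ℕ) : ℕ :=
  ((List.range bound).filter
    (fun t => decide (1 ≤ t) && !(b.contains t) && !(b.contains (2*n+1-t)))).foldl max 0

def Jgo (n : ℕ) (b : List ℕ) : List ℕ → ℕ → List ℕ
  | [], _ => []
  | z :: I', prev => let t := findT n b (min prev z); t :: Jgo n b I' t

/-- The list `J = {t_1 > ... > t_r}` of Definition 2.2. -/
def Jcompute (n : ℕ) (b : List ℕ) : List ℕ := Jgo n b (Icompute n b) (n+1)

def applySubst (s : List (ℕ × ℕ)) (x : ℕ) : ℕ :=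
  match s.find? (fun p => p.1 == x) with
  | some p => p.2
  | none => x

/-- The left column `b^L` of the split column: replace each `z_i` by `t_i` and reorder. -/
def splitL (n : ℕ) (b : List ℕ) : List ℕ :=
  sortList (b.map (applySubst ((Icompute n b).zip (Jcompute n b))))

/-- The right column `b^R` of the split column: replace each `z̄_i` by `t̄_i` and reorder. -/
def splitR (n : ℕ) (b : List ℕ) : List ℕ :=
  sortList (b.map (applySubst
    (((Icompute n b).map (fun z => 2*n+1-z)).zip ((Jcompute n b).map (fun t => 2*n+1-t)))))

/-- The filling of the doubled shape `2μ` by split columns. -/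
def splitFilling (n : ℕ) (b : List (List ℕ)) : List (List ℕ) :=
  (b.map (fun col => [splitL n col, splitR n col])).flatten

/-- The type `C` charge (3.2): half the sum of arm lengths over descents of the
circular reordering of the split filling. -/
def chargeC (n : ℕ) (b : List (List ℕ)) : ℕ :=
  CO.armSum (CO.circOrd (2*n) (splitFilling n b)) / 2

/-- `ε_0` of a single KN column: `e_0` changes a `1` into `1̄`. -/
def eps0C (_n : ℕ) (x : List ℕ) : ℕ := if x.contains 1 then 1 else 0

/-- `φ_0` of a single KN column: `f_0` changes a `1̄` into `1`. -/
def phi0C (n : ℕ) (x : List ℕ) : ℕ := if x.contains (2*n) then 1 else 0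

/-- `e_0` on a single KN column: change the `1` into `1̄`. -/
def e0colC (n : ℕ) (x : List ℕ) : List ℕ := sortList ((x.erase 1) ++ [2*n])

/-- `f_0` on a single KN column: change the `1̄` into `1`. -/
def f0colC (n : ℕ) (x : List ℕ) : List ℕ := sortList ((x.erase (2*n)) ++ [1])

/-- `e_0` on a tensor product of KN columns, via the signature rule. -/
def e0TC (n : ℕ) : List (List ℕ) → List (List ℕ) := Cry.eT (eps0C n) (phi0C n) (e0colC n)

/-- `f_0` on a tensor product of KN columns, via the signature rule. -/
def f0TC (n : ℕ) : List (List ℕ) → List (List ℕ) := Cry.fT (eps0C n) (phi0C n) (f0colC n)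

/-- Letter-level `ε_i` for type `C_n^{(1)}`, `i = 0, 1, ..., n`. -/
def epsC (n i x : ℕ) : ℕ :=
  if i = 0 then (if x = 1 then 1 else 0)
  else if i = n then (if x = n+1 then 1 else 0)
  else if x = i+1 ∨ x = 2*n+1-i then 1 else 0

/-- Letter-level `φ_i` for type `C_n^{(1)}`. -/
def phiC (n i x : ℕ) : ℕ :=
  if i = 0 then (if x = 2*n then 1 else 0)
  else if i = n then (if x = n then 1 else 0)
  else if x = i ∨ x = 2*n-i then 1 else 0

/-- Letter-level `e_i` for type `C_n^{(1)}`. -/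
def eCl (n i x : ℕ) : ℕ :=
  if i = 0 then (if x = 1 then 2*n else x)
  else if i = n then (if x = n+1 then n else x)
  else if x = i+1 then i else if x = 2*n+1-i then 2*n-i else x

/-- Letter-level `f_i` for type `C_n^{(1)}`. -/
def fCl (n i x : ℕ) : ℕ :=
  if i = 0 then (if x = 2*n then 1 else x)
  else if i = n then (if x = n then n+1 else x)
  else if x = i then i+1 else if x = 2*n-i then 2*n+1-i else x

/-- `ε_i` of a KN column (via its reading word). -/
def colEps (n i : ℕ) (c : List ℕ) : ℕ := Cry.epsT (epsC n i) (phiC n i) c.reverse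

/-- `φ_i` of a KN column (via its reading word). -/
def colPhi (n i : ℕ) (c : List ℕ) : ℕ := Cry.phiT (epsC n i) (phiC n i) c.reverse

/-- `e_i` on a KN column (via its reading word). -/
def colE (n i : ℕ) (c : List ℕ) : List ℕ :=
  sortList (Cry.eT (epsC n i) (phiC n i) (eCl n i) c.reverse)

/-- `f_i` on a KN column (via its reading word). -/
def colF (n i : ℕ) (c : List ℕ) : List ℕ :=
  sortList (Cry.fT (epsC n i) (phiC n i) (fCl n i) c.reverse)

end TC

/-- `t` is an admissible letter below `bound` for the splitting of the column `b`:
`1 ≤ t < bound`, and neither `t` nor `t̄` occurs in `b`. -/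
def goodAt (n : ℕ) (b : List ℕ) (bound t : ℕ) : Prop :=
  1 ≤ t ∧ t < bound ∧ t ∉ b ∧ (2*n+1-t) ∉ b

/-- `SplitSeq n b I prev J` holds iff `J` is the list of letters `t_1 > t_2 > ⋯`
required by the splitting procedure (Definition 2.2) for the list `I` of doubled
letters `z_1 > z_2 > ⋯`, where each `t_i` is the greatest admissible letter
smaller than `min (t_{i-1}, z_i)`. -/
def SplitSeq (n : ℕ) (b : List ℕ) : List ℕ → ℕ → List ℕ → Prop
  | [], _, J => J = []
  | z :: I', prev, J =>
    ∃ t J', J = t :: J' ∧ goodAt n b (min prev z) t ∧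
      (∀ s, goodAt n b (min prev z) s → s ≤ t) ∧ SplitSeq n b I' t J'

/-! Let `z = b[p]` be a doubled letter, `z̄ = b[q]`, and `k` the height of `b`. Sorting the
letters `t < z` by whether `t` or `t̄` lies in `b` gives `#free(z) + p + k = z + #doubled(z) + q`,
where `free(z)` and `doubled(z)` are the letters below `z` with neither, resp. both, of `t, t̄`
in `b`. So the KN inequality at `z` says that more letters below `z` are free than doubled.
The doubled letters below `z_j` are `z_{j+1}, …, z_r`, so the KN condition reads
`#free(z_j) ≥ r - j + 1` for every `j`: the Hall-type condition under which the greedy choice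
of `t_1 > t_2 > ⋯` never runs out. Each `t_i` is forced, hence `J` is unique. -/

namespace List

variable {α : Type*} {r : α → α → Prop} [Std.Asymm r] {l : List α}

theorem Pairwise.rel_getElem_iff (hl : l.Pairwise r) {i j : ℕ} (hi : i < l.length)
    (hj : j < l.length) : r l[i] l[j] ↔ i < j := by
  refine ⟨fun h => ?_, pairwise_iff_getElem.mp hl i j hi hj⟩
  by_contra hji
  rcases (not_lt.mp hji).eq_or_lt with rfl | hlt
  · exact Std.Asymm.asymm _ _ h h
  · exact Std.Asymm.asymm _ _ h (pairwise_iff_getElem.mp hl j i hj hi hlt)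

theorem Pairwise.filter_rel_getElem [DecidableRel r] (hl : l.Pairwise r) {i : ℕ}
    (hi : i < l.length) :
    l.filter (fun x => r x l[i]) = l.take i := by
  conv_lhs => enter [2]; rw [← take_append_drop i l]
  rw [filter_append, filter_eq_self.mpr, filter_eq_nil_iff.mpr, append_nil]
  · simp only [mem_drop_iff_getElem, decide_eq_true_eq]
    rintro _ ⟨j, hj, rfl⟩
    rw [hl.rel_getElem_iff]
    omega
  · simp only [mem_take_iff_getElem, decide_eq_true_eq]
    rintro _ ⟨j, hj, rfl⟩
    rw [hl.rel_getElem_iff]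
    omega

theorem Pairwise.filter_getElem_rel [DecidableRel r] (hl : l.Pairwise r) {i : ℕ}
    (hi : i < l.length) :
    l.filter (fun x => r l[i] x) = l.drop (i + 1) := by
  conv_lhs => enter [2]; rw [← take_append_drop (i + 1) l]
  rw [filter_append, filter_eq_nil_iff.mpr, filter_eq_self.mpr, nil_append]
  · simp only [mem_drop_iff_getElem, decide_eq_true_eq]
    rintro _ ⟨j, hj, rfl⟩
    rw [hl.rel_getElem_iff]
    omega
  · simp only [mem_take_iff_getElem, decide_eq_true_eq]
    rintro _ ⟨j, hj, rfl⟩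
    rw [hl.rel_getElem_iff]
    omega

end List

open Finset

def freeBelow (n : ℕ) (b : List ℕ) (m : ℕ) : Finset ℕ :=
  (Ioo 0 m).filter (fun t => t ∉ b ∧ 2*n+1-t ∉ b)

def doubledBelow (n : ℕ) (b : List ℕ) (m : ℕ) : Finset ℕ :=
  (Ioo 0 m).filter (fun t => t ∈ b ∧ 2*n+1-t ∈ b)

section Column

variable {n : ℕ} {b : List ℕ}

theorem mem_freeBelow {m t : ℕ} : t ∈ freeBelow n b m ↔ goodAt n b m t := by
  simp only [freeBelow, mem_filter, mem_Ioo, goodAt]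
  tauto

theorem freeBelow_mono : Monotone (freeBelow n b) := fun _ _ h =>
  filter_subset_filter _ (Ioo_subset_Ioo_right h)

theorem card_freeBelow_of_isGreatest {m t : ℕ} (ht : IsGreatest {s | goodAt n b m s} t) :
    #(freeBelow n b t) + 1 = #(freeBelow n b m) := by
  have hinsert : insert t (freeBelow n b t) = freeBelow n b m := by
    ext s
    simp only [mem_insert, mem_freeBelow]
    constructor
    · rintro (rfl | hs)
      · exact ht.1
      · exact ⟨hs.1, hs.2.1.trans ht.1.2.1, hs.2.2⟩
    · intro hs
      rcases (ht.2 hs).eq_or_lt with rfl | hlt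
      · exact Or.inl rfl
      · exact Or.inr ⟨hs.1, hlt, hs.2.2⟩
  rw [← hinsert, card_insert_of_notMem (fun h => (mem_freeBelow.mp h).2.1.false)]

theorem SplitSeq.unique : ∀ {I : List ℕ} {prev : ℕ} {J J' : List ℕ},
    SplitSeq n b I prev J → SplitSeq n b I prev J' → J = J'
  | [], _, _, _, hJ, hJ' => hJ.trans hJ'.symm
  | _ :: _, _, _, _, ⟨t, _, rfl, hg, hm, hr⟩, ⟨t', _, rfl, hg', hm', hr'⟩ => by
    obtain rfl : t = t' := le_antisymm (hm' t hg) (hm t' hg')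
    rw [SplitSeq.unique hr hr']

theorem exists_splitSeq_iff : ∀ (I : List ℕ) (prev : ℕ),
    (∃ J, SplitSeq n b I prev J) ↔
      ∀ j (hj : j < I.length), I.length - j ≤ #(freeBelow n b (min prev I[j]))
  | [], _ => by simp [SplitSeq]
  | z :: I, prev => by
    constructor
    · rintro ⟨_, t, J, rfl, hg, hm, hJ⟩
      have hcard := card_freeBelow_of_isGreatest (n := n) (b := b) ⟨hg, fun s hs => hm s hs⟩
      have hC := (exists_splitSeq_iff I t).mp ⟨J, hJ⟩
      rintro (_ | j) hj
      · have : I.length ≤ #(freeBelow n b t) := by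
          rcases I with _ | ⟨z', I'⟩
          · exact Nat.zero_le _
          · exact (hC 0 (by simp)).trans (card_le_card (freeBelow_mono (min_le_left _ _)))
        simp only [List.length_cons, List.getElem_cons_zero]
        omega
      · have hj : j < I.length := by simpa using hj
        have hle : min t I[j] ≤ min prev I[j] :=
          min_le_min_right _ (hg.2.1.le.trans (min_le_left _ _))
        simpa using (hC j hj).trans (card_le_card (freeBelow_mono hle))
    · intro hC
      have h0 := hC 0 (by simp)
      simp only [List.length_cons, List.getElem_cons_zero] at h0
      have hne : (freeBelow n b (min prev z)).Nonempty := card_pos.mp (by omega)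
      set t := (freeBelow n b (min prev z)).max' hne
      have ht : IsGreatest {s | goodAt n b (min prev z) s} t :=
        (Set.ext fun _ => mem_freeBelow) ▸ isGreatest_max' _ hne
      obtain ⟨J, hJ⟩ := (exists_splitSeq_iff I t).mpr fun j hj => by
        have hcard := card_freeBelow_of_isGreatest ht
        rcases le_or_gt I[j] t with hle | hlt
        · have hprev : min prev I[j] = I[j] :=
            min_eq_right (hle.trans (ht.1.2.1.le.trans (min_le_left _ _)))
          have := hC (j + 1) (by simpa using hj)
          simp only [List.length_cons, List.getElem_cons_succ, hprev] at this
          rw [min_eq_right hle]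
          omega
        · rw [min_eq_left hlt.le]
          omega
      exact ⟨t :: J, t, J, rfl, ht.1, fun s hs => ht.2 hs, hJ⟩

theorem card_freeBelow_add_card_filter_add_card_filter (z : ℕ) :
    #(freeBelow n b z) + #{t ∈ Ioo 0 z | t ∈ b} + #{t ∈ Ioo 0 z | 2*n+1-t ∈ b}
      = z - 1 + #(doubledBelow n b z) := by
  have hfree := card_filter_add_card_filter_not (s := Ioo 0 z) (fun t => t ∈ b ∨ 2*n+1-t ∈ b)
  have hunion := card_union_add_card_inter {t ∈ Ioo 0 z | t ∈ b} {t ∈ Ioo 0 z | 2*n+1-t ∈ b}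
  simp only [not_or] at hfree
  rw [← filter_or, ← filter_and] at hunion
  rw [Nat.card_Ioo] at hfree
  unfold freeBelow doubledBelow
  omega

theorem card_filter_mem_Ioo_getElem (hb : b.Pairwise (· < ·)) (h1 : ∀ x ∈ b, 1 ≤ x)
    {p : ℕ} (hp : p < b.length) : #{t ∈ Ioo 0 b[p] | t ∈ b} = p := by
  have : {t ∈ Ioo 0 b[p] | t ∈ b} = (b.filter (· < b[p])).toFinset := by
    ext t
    simp only [mem_filter, mem_Ioo, List.mem_toFinset, List.mem_filter, decide_eq_true_eq]
    exact ⟨fun h => ⟨h.2, h.1.2⟩, fun h => ⟨⟨h1 t h.1, h.2⟩, h.1⟩⟩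
  have hnd : b.Nodup := hb.imp ne_of_lt
  rw [this, hb.filter_rel_getElem hp,
    List.toFinset_card_of_nodup (hnd.sublist (List.take_sublist _ _)), List.length_take_of_le hp.le]

theorem card_filter_bar_mem_Ioo_getElem (hb : b.Pairwise (· < ·)) (h2 : ∀ x ∈ b, x ≤ 2*n)
    {q : ℕ} (hq : q < b.length) :
    #{t ∈ Ioo 0 (2*n+1 - b[q]) | 2*n+1-t ∈ b} = b.length - (q + 1) := by
  have hnd : b.Nodup := hb.imp ne_of_lt
  rw [← List.length_drop, ← hb.filter_getElem_rel hq,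
    ← List.toFinset_card_of_nodup (hnd.filter _)]
  refine card_nbij' (2*n+1 - ·) (2*n+1 - ·) ?_ ?_ ?_ ?_ <;> intro x hx <;>
    simp only [coe_filter, mem_Ioo, List.coe_toFinset, List.mem_filter, decide_eq_true_eq,
      Set.mem_ofPred_eq] at hx ⊢
  · obtain ⟨⟨-, hlt⟩, hmem⟩ := hx
    exact ⟨hmem, by omega⟩
  · obtain ⟨hmem, hlt⟩ := hx
    have := h2 x hmem
    rw [Nat.sub_sub_self (by omega)]
    exact ⟨by omega, hmem⟩
  · obtain ⟨⟨-, hlt⟩, -⟩ := hx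
    omega
  · have := h2 x hx.1
    omega

theorem card_freeBelow_getElem_add_add_length (hb : b.Pairwise (· < ·))
    (hrange : ∀ x ∈ b, 1 ≤ x ∧ x ≤ 2*n) {p q : ℕ} (hp : p < b.length)
    (hq : q < b.length) (hbar : b[q] = 2*n+1 - b[p]) :
    #(freeBelow n b b[p]) + p + b.length = b[p] + #(doubledBelow n b b[p]) + q := by
  have hz := hrange _ (b.getElem_mem hp)
  have hbelow := card_filter_mem_Ioo_getElem hb (fun x hx => (hrange x hx).1) hp
  have habove := card_filter_bar_mem_Ioo_getElem hb (fun x hx => (hrange x hx).2) hq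
  rw [hbar, Nat.sub_sub_self (by omega)] at habove
  have := card_freeBelow_add_card_filter_add_card_filter (n := n) (b := b) b[p]
  omega

theorem mem_Icompute {z : ℕ} :
    z ∈ TC.Icompute n b ↔ 1 ≤ z ∧ z ≤ n ∧ z ∈ b ∧ 2*n+1-z ∈ b := by
  simp only [TC.Icompute, List.mem_reverse, List.mem_filter, List.mem_map, List.mem_range,
    Bool.and_eq_true, List.contains_iff_mem]
  constructor
  · rintro ⟨⟨a, ha, rfl⟩, h⟩
    exact ⟨by omega, by omega, h⟩
  · rintro ⟨h1, hn, h⟩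
    exact ⟨⟨z - 1, by omega, by omega⟩, h⟩

theorem Icompute_pairwise : (TC.Icompute n b).Pairwise (· > ·) := by
  rw [TC.Icompute, List.pairwise_reverse]
  exact (List.pairwise_map.mpr (List.pairwise_lt_range.imp (by omega))).filter _

theorem card_doubledBelow_getElem_Icompute {j : ℕ} (hj : j < (TC.Icompute n b).length) :
    #(doubledBelow n b (TC.Icompute n b)[j]) = (TC.Icompute n b).length - (j + 1) := by
  have hI := Icompute_pairwise (n := n) (b := b)
  have hzn := (mem_Icompute.mp (List.getElem_mem hj)).2.1
  have : doubledBelow n b (TC.Icompute n b)[j]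
      = ((TC.Icompute n b).filter (fun x => (TC.Icompute n b)[j] > x)).toFinset := by
    ext t
    simp only [doubledBelow, mem_filter, mem_Ioo, List.mem_toFinset, List.mem_filter,
      mem_Icompute, decide_eq_true_eq]
    constructor
    · rintro ⟨⟨h0, hlt⟩, h⟩
      exact ⟨⟨h0, by omega, h⟩, hlt⟩
    · rintro ⟨⟨h0, -, h⟩, hlt⟩
      exact ⟨⟨h0, hlt⟩, h⟩
  rw [this, hI.filter_getElem_rel hj,
    List.toFinset_card_of_nodup ((hI.imp ne_of_gt).sublist (List.drop_sublist _ _)),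
    List.length_drop]

theorem kn_iff_forall_card_freeBelow (hb : b.Pairwise (· < ·))
    (hrange : ∀ x ∈ b, 1 ≤ x ∧ x ≤ 2*n) :
    (∀ p q, p < q → q < b.length → b.getD p 0 ≤ n → b.getD q 0 = 2*n+1 - b.getD p 0 →
        b.length - b.getD p 0 < q - p) ↔
      ∀ j (hj : j < (TC.Icompute n b).length),
        (TC.Icompute n b).length - j ≤ #(freeBelow n b (TC.Icompute n b)[j]) := by
  constructor
  · intro hKN j hj
    obtain ⟨-, hzn, hz, hzbar⟩ := mem_Icompute.mp (List.getElem_mem hj)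
    obtain ⟨p, hp, hbp⟩ := List.mem_iff_getElem.mp hz
    obtain ⟨q, hq, hbq⟩ := List.mem_iff_getElem.mp hzbar
    have hpq : p < q := (hb.rel_getElem_iff hp hq).mp (by omega)
    have hKNz := hKN p q hpq hq
    rw [List.getD_eq_getElem _ _ hp, List.getD_eq_getElem _ _ hq] at hKNz
    have := hKNz (by omega) (by omega)
    have hid := card_freeBelow_getElem_add_add_length hb hrange hp hq (by omega)
    have hD := card_doubledBelow_getElem_Icompute hj
    rw [hbp] at hid
    omega
  · intro h p q hpq hq hpn hqv
    have hp := hpq.trans hq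
    simp only [List.getD_eq_getElem _ _ hp, List.getD_eq_getElem _ _ hq] at hpn hqv ⊢
    have hzI : b[p] ∈ TC.Icompute n b := mem_Icompute.mpr ⟨(hrange _ (List.getElem_mem hp)).1,
      hpn, List.getElem_mem hp, hqv ▸ List.getElem_mem hq⟩
    obtain ⟨j, hj, hjz⟩ := List.mem_iff_getElem.mp hzI
    have hfree := h j hj
    have hD := card_doubledBelow_getElem_Icompute hj
    rw [hjz] at hfree hD
    have hid := card_freeBelow_getElem_add_add_length hb hrange hp hq hqv
    omega

end Column

/-- a strictly increasing column `b` of height `k` over the alphabet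
`[n̄]` satisfies the KN condition iff it can be split; moreover the splitting
list `J` is unique. -/
theorem KN_iff_splittable (n k : ℕ) (b : List ℕ)
    (hlen : b.length = k) (hinc : b.Chain' (· < ·))
    (hrange : ∀ x ∈ b, 1 ≤ x ∧ x ≤ 2*n) :
    ((∀ p q, p < q → q < b.length → b.getD p 0 ≤ n →
        b.getD q 0 = 2*n+1 - b.getD p 0 → k - b.getD p 0 < q - p) ↔
      ∃ J, SplitSeq n b (TC.Icompute n b) (n+1) J) ∧
    (∀ J J', SplitSeq n b (TC.Icompute n b) (n+1) J →
      SplitSeq n b (TC.Icompute n b) (n+1) J' → J = J') := by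
  subst hlen
  refine ⟨?_, fun _ _ => SplitSeq.unique⟩
  rw [kn_iff_forall_card_freeBelow (List.isChain_iff_pairwise.mp hinc) hrange,
    exists_splitSeq_iff]
  refine forall₂_congr fun j hj => ?_
  have hzn := (mem_Icompute.mp (List.getElem_mem hj)).2.1
  rw [min_eq_right (by omega)]
end

section
/- In a split KN column pair c_j^L c_j^R arising from the type C circular reordering algorithm applied to a tensor product of KN columns, there is never a descent within the pair, i.e., c_j^L(i) ≤ c_j^R(i) for all rows i. Consequently, if c_j^L(i) = 1 then c_j^R(i) = 1. -/
/-!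
Splitting a KN column lowers each `zᵢ` to `tᵢ` in `b^L` and raises each `z̄ᵢ` to `t̄ᵢ` in `b^R`
(that the `tᵢ ≥ 1` exist is a count of free letters below `zᵢ` using the KN condition). Hence for
every threshold `v`, `b^R` has at least as many entries `≥ v` as `b^L`, and this survives
replacing `b^L` by any reordering of it. Circular reordering fills row `i` of `c_j^R` with the
`≺_{c_j^L(i)}`-least remaining letter, which is the least remaining letter `≥ c_j^L(i)` as long as
one exists; the domination guarantees that one does, row after row. If `1 ∈ b_j`, no `tᵢ` is `1`,
so `b^R` contains `1` as often as `b^L`, and the letter chosen opposite a `1` is that `1`.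
-/

open List

namespace CO

theorem foldl_argmin_spec {α : Type*} (key : α → ℕ) :
    ∀ (l : List α) (a : α),
      l.foldl (fun acc x => if key x < key acc then x else acc) a ∈ a :: l ∧
      ∀ x ∈ a :: l, key (l.foldl (fun acc x => if key x < key acc then x else acc) a) ≤ key x
  | [], a => by simp
  | b :: l, a => by
    rw [foldl_cons]
    split_ifs with h
    · obtain ⟨hmem, hle⟩ := foldl_argmin_spec key l b
      refine ⟨mem_cons_of_mem _ hmem, fun x hx => ?_⟩
      rcases mem_cons.1 hx with rfl | hx
      · exact (hle b mem_cons_self).trans h.le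
      · exact hle x hx
    · obtain ⟨hmem, hle⟩ := foldl_argmin_spec key l a
      refine ⟨?_, fun x hx => ?_⟩
      · rcases mem_cons.1 hmem with h' | h'
        · rw [h']
          exact mem_cons_self
        · exact mem_cons_of_mem _ (mem_cons_of_mem _ h')
      · rcases mem_cons.1 hx with rfl | hx
        · exact hle x mem_cons_self
        rcases mem_cons.1 hx with rfl | hx
        · exact (hle a mem_cons_self).trans (not_lt.1 h)
        · exact hle x (mem_cons_of_mem _ hx)

theorem circMin_mem {N t : ℕ} {l : List ℕ} (hl : l ≠ []) : circMin N t l ∈ l := by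
  obtain ⟨a, l', rfl⟩ := exists_cons_of_ne_nil hl
  have := (foldl_argmin_spec (circKey N t) (a :: l') a).1
  rcases mem_cons.1 this with h | h
  · simp [circMin, h]
  · exact h

theorem circKey_circMin_le {N t x : ℕ} {l : List ℕ} (hx : x ∈ l) :
    circKey N t (circMin N t l) ≤ circKey N t x :=
  (foldl_argmin_spec (circKey N t) l (l.headD 0)).2 x (mem_cons_of_mem _ hx)

theorem circKey_of_le {N t x : ℕ} (ht : 1 ≤ t) (htx : t ≤ x) (hx : x ≤ N) :
    circKey N t x = x - t := by
  rw [circKey, show x + N - t = (x - t) + N by omega, Nat.add_mod_right,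
    Nat.mod_eq_of_lt (by omega)]

theorem circKey_of_lt {N t x : ℕ} (hxt : x < t) (ht : t ≤ N) :
    circKey N t x = x + N - t :=
  Nat.mod_eq_of_lt (by omega)

theorem circMin_isLeast {N t : ℕ} {l : List ℕ} (ht : 1 ≤ t) (htN : t ≤ N)
    (hl : ∀ x ∈ l, 1 ≤ x ∧ x ≤ N) (hex : ∃ x ∈ l, t ≤ x) :
    IsLeast {x | x ∈ l ∧ t ≤ x} (circMin N t l) := by
  obtain ⟨w, hw, htw⟩ := hex
  have hm := circMin_mem (N := N) (t := t) (ne_nil_of_mem hw)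
  have hmw := circKey_circMin_le (N := N) (t := t) hw
  rw [circKey_of_le ht htw (hl w hw).2] at hmw
  have htm : t ≤ circMin N t l := by
    by_contra! h
    rw [circKey_of_lt h htN] at hmw
    have := hl w hw
    have := hl _ hm
    omega
  refine ⟨⟨hm, htm⟩, fun x ⟨hx, htx⟩ => ?_⟩
  have hmx := circKey_circMin_le (N := N) (t := t) hx
  rw [circKey_of_le ht htx (hl x hx).2, circKey_of_le ht htm (hl _ hm).2] at hmx
  omega

theorem length_reorderCol_le (N : ℕ) :
    ∀ prev rem : List ℕ, (reorderCol N prev rem).length ≤ prev.length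
  | [], _ => by simp [reorderCol]
  | _ :: _, [] => by simp [reorderCol]
  | _ :: prev, _ :: _ => by
    simpa [reorderCol] using length_reorderCol_le N prev _

theorem reorderCol_subperm (N : ℕ) : ∀ prev rem : List ℕ, (reorderCol N prev rem).Subperm rem
  | [], _ => by simp [reorderCol]
  | _ :: _, [] => by simp [reorderCol]
  | p :: prev, r :: rem => by
    have hm := circMin_mem (N := N) (t := p) (cons_ne_nil r rem)
    exact ((subperm_cons _).2 (reorderCol_subperm N prev _)).trans
      (perm_cons_erase hm).symm.subperm

theorem reorderCol_cons {N p : ℕ} {prev rem : List ℕ} (hrem : rem ≠ []) :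
    reorderCol N (p :: prev) rem =
      circMin N p rem :: reorderCol N prev (rem.erase (circMin N p rem)) := by
  obtain ⟨r, rem, rfl⟩ := exists_cons_of_ne_nil hrem
  rfl

def Dominated (l r : List ℕ) : Prop :=
  ∀ v, l.countP (fun x => v ≤ x) ≤ r.countP (fun x => v ≤ x)

theorem dominated_map_of_le {α : Type*} {l : List α} {f g : α → ℕ}
    (h : ∀ y ∈ l, f y ≤ g y) : Dominated (l.map f) (l.map g) := by
  intro v
  simp only [countP_map]
  exact countP_mono_left fun y hy hfy => by simpa using (of_decide_eq_true hfy).trans (h y hy)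

theorem Dominated.subperm_left {l l' r : List ℕ} (h : Dominated l r) (hl : l'.Subperm l) :
    Dominated l' r :=
  fun v => (hl.countP_le _).trans (h v)

theorem Dominated.exists_ge {p : ℕ} {l r : List ℕ} (h : Dominated (p :: l) r) :
    ∃ x ∈ r, p ≤ x := by
  have hp := h p
  rw [countP_cons_of_pos (by simp)] at hp
  obtain ⟨x, hx, hpx⟩ := countP_pos_iff.1 (by omega : 0 < r.countP (fun x => p ≤ x))
  exact ⟨x, hx, by simpa using hpx⟩

/-- Matching `p` with the least `m ≥ p` in `r` preserves domination: thresholds `v ≤ p` lose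
one entry on both sides, thresholds `v > m` none on the right, and for `p < v ≤ m` the
right-hand count equals the one at threshold `p`. -/
theorem Dominated.erase {p m : ℕ} {l r : List ℕ} (h : Dominated (p :: l) r)
    (hm : IsLeast {x | x ∈ r ∧ p ≤ x} m) : Dominated l (r.erase m) := by
  obtain ⟨⟨hmr, hpm⟩, hmin⟩ := hm
  intro v
  have hr : ∀ w, r.countP (fun x => w ≤ x) =
      (r.erase m).countP (fun x => w ≤ x) + if w ≤ m then 1 else 0 := by
    intro w
    rw [(perm_cons_erase hmr).countP_eq, countP_cons]
    simp
  have hl : ∀ w, (p :: l).countP (fun x => w ≤ x) =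
      l.countP (fun x => w ≤ x) + if w ≤ p then 1 else 0 := by
    intro w
    rw [countP_cons]
    simp
  have hv := h v
  rw [hr, hl] at hv
  by_cases hvp : v ≤ p
  · simp only [hvp, hvp.trans hpm, if_true] at hv
    omega
  by_cases hvm : v ≤ m
  · have hrv : r.countP (fun x => v ≤ x) = r.countP (fun x => p ≤ x) :=
      countP_congr fun x hx => by
        simpa using ⟨fun h => by omega, fun h => hvm.trans (hmin ⟨hx, h⟩)⟩
    have hlv : l.countP (fun x => v ≤ x) ≤ l.countP (fun x => p ≤ x) :=
      countP_mono_left fun x _ h => by simp at h ⊢; omega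
    have hp := h p
    rw [hl, ← hrv, hr] at hp
    simp only [le_refl, hvm, if_true] at hp
    omega
  · simp only [hvp, hvm, if_false] at hv
    omega

theorem isLeast_eq_of_count_le {a m : ℕ} {l r : List ℕ}
    (hm : IsLeast {x | x ∈ r ∧ a ≤ x} m) (h : (a :: l).count a ≤ r.count a) : m = a := by
  have ha : a ∈ r := count_pos_iff.1 (by simp at h; omega)
  exact le_antisymm (hm.2 ⟨ha, le_rfl⟩) hm.1.2

theorem count_le_count_erase {a p m : ℕ} {l r : List ℕ} (hap : a ≤ p)
    (hm : IsLeast {x | x ∈ r ∧ p ≤ x} m) (h : (p :: l).count a ≤ r.count a) :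
    l.count a ≤ (r.erase m).count a := by
  rcases hap.eq_or_lt with rfl | hap
  · rw [isLeast_eq_of_count_le hm h, count_erase_self]
    simp at h
    omega
  · rw [count_erase_of_ne (by have := hm.1.2; omega)]
    rw [count_cons_of_ne (by omega)] at h
    exact h

theorem reorderCol_cons_of_dominated {N p : ℕ} {l rem : List ℕ} (hp : 1 ≤ p ∧ p ≤ N)
    (hrem : ∀ x ∈ rem, 1 ≤ x ∧ x ≤ N) (h : Dominated (p :: l) rem) :
    ∃ m, IsLeast {x | x ∈ rem ∧ p ≤ x} m ∧
      reorderCol N (p :: l) rem = m :: reorderCol N l (rem.erase m) := by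
  obtain ⟨w, hw, -⟩ := h.exists_ge
  exact ⟨_, circMin_isLeast hp.1 hp.2 hrem h.exists_ge, reorderCol_cons (ne_nil_of_mem hw)⟩

theorem le_getD_reorderCol {N : ℕ} : ∀ {prev rem : List ℕ},
    (∀ x ∈ prev, 1 ≤ x ∧ x ≤ N) → (∀ x ∈ rem, 1 ≤ x ∧ x ≤ N) → Dominated prev rem →
    ∀ i < prev.length, prev.getD i 0 ≤ (reorderCol N prev rem).getD i 0
  | [], _, _, _, _, i, hi => absurd hi (by simp)
  | p :: l, rem, hprev, hrem, hdom, i, hi => by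
    obtain ⟨m, hm, heq⟩ := reorderCol_cons_of_dominated (hprev p mem_cons_self) hrem hdom
    rw [heq]
    cases i with
    | zero => exact hm.1.2
    | succ i =>
      simpa using le_getD_reorderCol (fun x hx => hprev x (mem_cons_of_mem _ hx))
        (fun x hx => hrem x (mem_of_mem_erase hx)) (hdom.erase hm) i (by simpa using hi)

theorem getD_reorderCol_eq_one {N : ℕ} : ∀ {prev rem : List ℕ},
    (∀ x ∈ prev, 1 ≤ x ∧ x ≤ N) → (∀ x ∈ rem, 1 ≤ x ∧ x ≤ N) → Dominated prev rem →
    prev.count 1 ≤ rem.count 1 →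
    ∀ i < prev.length, prev.getD i 0 = 1 → (reorderCol N prev rem).getD i 0 = 1
  | [], _, _, _, _, _, i, hi => absurd hi (by simp)
  | p :: l, rem, hprev, hrem, hdom, hcount, i, hi => by
    obtain ⟨m, hm, heq⟩ := reorderCol_cons_of_dominated (hprev p mem_cons_self) hrem hdom
    rw [heq]
    cases i with
    | zero =>
      rintro (rfl : p = 1)
      exact isLeast_eq_of_count_le hm hcount
    | succ i =>
      simpa using getD_reorderCol_eq_one (fun x hx => hprev x (mem_cons_of_mem _ hx))
        (fun x hx => hrem x (mem_of_mem_erase hx)) (hdom.erase hm)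
        (count_le_count_erase (hprev p mem_cons_self).1 hm hcount) i (by simpa using hi)

def PairNoDescent (col cL cR : List ℕ) : Prop :=
  ∀ i < cR.length, cL.getD i 0 ≤ cR.getD i 0 ∧ (1 ∈ col → cL.getD i 0 = 1 → cR.getD i 0 = 1)

theorem pairNoDescent_reorderCol {N : ℕ} {col L R c : List ℕ}
    (hL : ∀ x ∈ L, 1 ≤ x ∧ x ≤ N) (hR : ∀ x ∈ R, 1 ≤ x ∧ x ≤ N) (hdom : Dominated L R)
    (hone : 1 ∈ col → L.count 1 ≤ R.count 1) (hc : c.Subperm L) :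
    PairNoDescent col c (reorderCol N c R) := by
  have hcb : ∀ x ∈ c, 1 ≤ x ∧ x ≤ N := fun x hx => hL x (hc.subset hx)
  intro i hi
  have hi' : i < c.length := hi.trans_le (length_reorderCol_le N c R)
  exact ⟨le_getD_reorderCol hcb hR (hdom.subperm_left hc) i hi',
    fun h1 => getD_reorderCol_eq_one hcb hR (hdom.subperm_left hc)
      ((hc.count_le 1).trans (hone h1)) i hi'⟩

end CO

namespace TC

theorem insSorted_eq_orderedInsert (x : ℕ) : ∀ l, insSorted x l = l.orderedInsert (· ≤ ·) x
  | [] => rfl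
  | y :: l => by simp only [insSorted, orderedInsert_cons, insSorted_eq_orderedInsert x l]

theorem sortList_eq_insertionSort (l : List ℕ) : sortList l = l.insertionSort (· ≤ ·) := by
  have : insSorted = orderedInsert (· ≤ ·) := funext₂ insSorted_eq_orderedInsert
  rw [sortList, this]
  rfl

theorem sortList_perm (l : List ℕ) : sortList l ~ l := by
  rw [sortList_eq_insertionSort]
  exact perm_insertionSort _ l

theorem mem_Icompute {n z : ℕ} {col : List ℕ} :
    z ∈ Icompute n col ↔ 1 ≤ z ∧ z ≤ n ∧ z ∈ col ∧ 2*n+1-z ∈ col := by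
  simp only [Icompute, mem_reverse, mem_filter, mem_map, mem_range, Bool.and_eq_true,
    contains_iff_mem]
  constructor
  · rintro ⟨⟨u, hu, rfl⟩, h⟩
    exact ⟨by omega, by omega, h⟩
  · rintro ⟨h1, hn, h⟩
    exact ⟨⟨z - 1, by omega, by omega⟩, h⟩

theorem Icompute_pairwise (n : ℕ) (col : List ℕ) : (Icompute n col).Pairwise (· > ·) := by
  rw [Icompute, pairwise_reverse]
  refine Pairwise.filter _ (pairwise_map.2 ?_)
  exact (pairwise_lt_range (n := n)).imp fun h => by omega

/-- The candidates `t < m` for the letters `tᵢ` of Definition 2.2. -/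
def freeBelow (n : ℕ) (col : List ℕ) (m : ℕ) : Finset ℕ :=
  {t ∈ Finset.range m | 1 ≤ t ∧ t ∉ col ∧ 2*n+1-t ∉ col}

@[simp]
theorem mem_freeBelow {n m t : ℕ} {col : List ℕ} :
    t ∈ freeBelow n col m ↔ t < m ∧ 1 ≤ t ∧ t ∉ col ∧ 2*n+1-t ∉ col := by
  simp [freeBelow]

theorem findT_isGreatest {n m : ℕ} {col : List ℕ} (h : (freeBelow n col m).Nonempty) :
    IsGreatest (freeBelow n col m : Set ℕ) (findT n col m) := by
  set L := (List.range m).filter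
    (fun t => decide (1 ≤ t) && !(col.contains t) && !(col.contains (2*n+1-t)))
  have hL : ∀ t, t ∈ L ↔ t ∈ freeBelow n col m := by
    intro t
    simp [L, and_assoc]
  obtain ⟨t₀, ht₀⟩ := h
  have hne : L ≠ [] := ne_nil_of_mem ((hL t₀).2 ht₀)
  have hfind : findT n col m = L.max hne := by
    rw [findT, foldl_max, max?_eq_some_max hne]
    simp
  rw [hfind]
  exact ⟨(hL _).1 (max_mem hne), fun t ht => le_max_of_mem ((hL t).2 ht)⟩

/-- The KN condition for the pair `z, z̄` leaves at most `z - 2` letters `u < z` with `u` or `ū`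
in `col`, so the free ones outnumber those with both. -/
theorem IsKN.card_lt_card_freeBelow {n z : ℕ} {col : List ℕ} (hKN : IsKN n col) (hzn : z ≤ n)
    (hz : z ∈ col) (hzb : 2*n+1-z ∈ col) {D : Finset ℕ}
    (hD : ∀ w ∈ D, w < z ∧ w ∈ col ∧ 2*n+1-w ∈ col) :
    D.card < (freeBelow n col z).card := by
  obtain ⟨hchain, hbd, hcond⟩ := hKN
  have hs : col.SortedLT := sortedLT_iff_isChain.2 hchain
  obtain ⟨p, hp, hpz⟩ := mem_iff_getElem.1 hz
  obtain ⟨q, hq, hqz⟩ := mem_iff_getElem.1 hzb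
  have hz1 := (hbd z hz).1
  have hpq : p < q := hs.getElem_lt_getElem_iff.1 (by omega)
  have hkn := hcond p q hpq hq (by rw [getD_eq_getElem _ _ hp]; omega)
    (by rw [getD_eq_getElem _ _ hp, getD_eq_getElem _ _ hq]; omega)
  rw [getD_eq_getElem _ _ hp, hpz] at hkn
  set A : Finset ℕ := {u ∈ Finset.Ico 1 z | u ∈ col}
  set B : Finset ℕ := {u ∈ Finset.Ico 1 z | 2*n+1-u ∈ col}
  have hA : A.card ≤ p := by
    have hsub : A ⊆ (Finset.range p).image (col.getD · 0) := by
      intro u hu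
      obtain ⟨⟨-, huz⟩, hu⟩ : (1 ≤ u ∧ u < z) ∧ u ∈ col := by simpa [A] using hu
      obtain ⟨k, hk, rfl⟩ := mem_iff_getElem.1 hu
      exact Finset.mem_image.2 ⟨k, Finset.mem_range.2 (hs.getElem_lt_getElem_iff.1 (by omega)),
        getD_eq_getElem _ _ hk⟩
    exact (Finset.card_le_card hsub).trans (Finset.card_image_le.trans (Finset.card_range p).le)
  have hB : B.card ≤ col.length - q - 1 := by
    have hsub : B ⊆ (Finset.Ioo q col.length).image (2*n+1 - col.getD · 0) := by
      intro u hu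
      obtain ⟨⟨hu1, huz⟩, hu⟩ : (1 ≤ u ∧ u < z) ∧ 2*n+1-u ∈ col := by simpa [B] using hu
      obtain ⟨k, hk, hku⟩ := mem_iff_getElem.1 hu
      refine Finset.mem_image.2
        ⟨k, Finset.mem_Ioo.2 ⟨hs.getElem_lt_getElem_iff.1 (by omega), hk⟩, ?_⟩
      rw [getD_eq_getElem _ _ hk, hku]
      omega
    exact (Finset.card_le_card hsub).trans
      (Finset.card_image_le.trans (Nat.card_Ioo q col.length).le)
  have hcover : Finset.Ico 1 z ⊆ freeBelow n col z ∪ (A ∪ B) := by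
    intro u hu
    simp only [Finset.mem_union, mem_freeBelow, A, B, Finset.mem_filter, hu, true_and]
    rw [Finset.mem_Ico] at hu
    tauto
  have hDAB : D ⊆ A ∩ B := by
    intro w hw
    obtain ⟨hwz, hwc, hwb⟩ := hD w hw
    simp [A, B, hwz, hwc, hwb, (hbd w hwc).1]
  have h1 := Finset.card_le_card hcover
  have h2 := Finset.card_union_le (freeBelow n col z) (A ∪ B)
  have h3 := Finset.card_union_add_card_inter A B
  have h4 := Finset.card_le_card hDAB
  rw [Nat.card_Ico] at h1
  omega

theorem IsKN.length_lt_card_freeBelow {n z : ℕ} {col I : List ℕ} (hKN : IsKN n col)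
    (hsorted : (z :: I).Pairwise (· > ·))
    (hpaired : ∀ w ∈ z :: I, w ≤ n ∧ w ∈ col ∧ 2*n+1-w ∈ col) :
    I.length < (freeBelow n col z).card := by
  have hnodup : I.Nodup := hsorted.of_cons.imp ne_of_gt
  rw [← toFinset_card_of_nodup hnodup]
  obtain ⟨hzn, hz, hzb⟩ := hpaired z mem_cons_self
  refine hKN.card_lt_card_freeBelow hzn hz hzb fun w hw => ?_
  rw [mem_toFinset] at hw
  exact ⟨(pairwise_cons.1 hsorted).1 w hw, (hpaired w (mem_cons_of_mem _ hw)).2⟩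

/-- Each `t` is the largest free letter below `min prev z`; the invariant is that there are at
least as many free letters there as letters left to replace. -/
theorem IsKN.Jgo_spec {n : ℕ} {col : List ℕ} (hKN : IsKN n col) :
    ∀ (I : List ℕ) (prev z : ℕ), (z :: I).Pairwise (· > ·) →
      (∀ w ∈ z :: I, w ≤ n ∧ w ∈ col ∧ 2*n+1-w ∈ col) →
      (z :: I).length ≤ (freeBelow n col (min prev z)).card →
      ∀ pr ∈ (z :: I).zip (Jgo n col (z :: I) prev), 1 ≤ pr.2 ∧ pr.2 < pr.1 ∧ pr.2 ∉ col
  | I, prev, z, hsorted, hpaired, hcard => by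
    have hpos : 0 < (freeBelow n col (min prev z)).card :=
      (length_pos_of_ne_nil (cons_ne_nil z I)).trans_le hcard
    obtain ⟨ht, htmax⟩ := findT_isGreatest (Finset.card_pos.1 hpos)
    set t := findT n col (min prev z)
    obtain ⟨htlt, ht1, htcol, -⟩ := mem_freeBelow.1 ht
    intro pr hpr
    change pr ∈ (z, t) :: I.zip (Jgo n col I t) at hpr
    rcases mem_cons.1 hpr with rfl | hpr
    · exact ⟨ht1, htlt.trans_le (min_le_right _ _), htcol⟩
    match I with
    | [] => simp at hpr
    | z' :: I' =>
      refine hKN.Jgo_spec I' t z' hsorted.of_cons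
        (fun w hw => hpaired w (mem_cons_of_mem _ hw)) ?_ pr hpr
      rcases min_choice t z' with h | h <;> rw [h]
      · have hsub : freeBelow n col (min prev z) ⊆ insert t (freeBelow n col t) := by
          intro u hu
          rcases (htmax hu).eq_or_lt with rfl | hut
          · exact Finset.mem_insert_self _ _
          · exact Finset.mem_insert_of_mem (mem_freeBelow.2 ⟨hut, (mem_freeBelow.1 hu).2⟩)
        have := (Finset.card_le_card hsub).trans (Finset.card_insert_le _ _)
        simp only [length_cons] at hcard ⊢
        omega
      · simpa using hKN.length_lt_card_freeBelow hsorted.of_cons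
          fun w hw => hpaired w (mem_cons_of_mem _ hw)

theorem IsKN.mem_zip_Icompute_Jcompute {n : ℕ} {col : List ℕ} {pr : ℕ × ℕ} (hKN : IsKN n col)
    (hpr : pr ∈ (Icompute n col).zip (Jcompute n col)) :
    pr.1 ≤ n ∧ 1 ≤ pr.2 ∧ pr.2 < pr.1 ∧ pr.2 ∉ col := by
  refine ⟨(mem_Icompute.1 (of_mem_zip hpr).1).2.1, ?_⟩
  have hsorted := Icompute_pairwise n col
  have hpaired : ∀ w ∈ Icompute n col, w ≤ n ∧ w ∈ col ∧ 2*n+1-w ∈ col :=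
    fun w hw => (mem_Icompute.1 hw).2
  rw [Jcompute] at hpr
  cases h : Icompute n col with
  | nil => simp [h] at hpr
  | cons z I =>
    rw [h] at hpr hsorted hpaired
    refine hKN.Jgo_spec I (n+1) z hsorted hpaired ?_ pr hpr
    rw [min_eq_right (by have := (hpaired z mem_cons_self).1; omega)]
    simpa using hKN.length_lt_card_freeBelow hsorted hpaired

theorem applySubst_eq_or_mem (s : List (ℕ × ℕ)) (x : ℕ) :
    applySubst s x = x ∨ (x, applySubst s x) ∈ s := by
  unfold applySubst
  cases h : s.find? (fun p => p.1 == x) with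
  | none => exact Or.inl rfl
  | some pr =>
    have hx : pr.1 = x := by simpa using find?_some h
    exact Or.inr (hx ▸ mem_of_find?_eq_some h)

/-- The substitution `zᵢ ↦ tᵢ` producing `b^L`. -/
def substL (n : ℕ) (col : List ℕ) : ℕ → ℕ :=
  applySubst ((Icompute n col).zip (Jcompute n col))

/-- The substitution `z̄ᵢ ↦ t̄ᵢ` producing `b^R`. -/
def substR (n : ℕ) (col : List ℕ) : ℕ → ℕ :=
  applySubst (((Icompute n col).map (fun z => 2*n+1-z)).zip
    ((Jcompute n col).map (fun t => 2*n+1-t)))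

theorem substR_eq_or (n : ℕ) (col : List ℕ) (x : ℕ) :
    substR n col x = x ∨ ∃ pr ∈ (Icompute n col).zip (Jcompute n col),
      x = 2*n+1-pr.1 ∧ substR n col x = 2*n+1-pr.2 := by
  refine (applySubst_eq_or_mem _ x).imp_right fun h => ?_
  change (x, substR n col x) ∈ _ at h
  generalize substR n col x = s at h ⊢
  rw [zip_map, mem_map] at h
  obtain ⟨pr, hpr, hx⟩ := h
  simp only [Prod.map, Prod.mk.injEq] at hx
  exact ⟨pr, hpr, hx.1.symm, hx.2.symm⟩

variable {n : ℕ} {col : List ℕ}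

theorem IsKN.substL_le (hKN : IsKN n col) (y : ℕ) : substL n col y ≤ y := by
  rcases applySubst_eq_or_mem _ y with h | h
  · exact h.le
  · exact (hKN.mem_zip_Icompute_Jcompute h).2.2.1.le

theorem IsKN.one_le_substL (hKN : IsKN n col) {y : ℕ} (hy : 1 ≤ y) : 1 ≤ substL n col y := by
  rcases applySubst_eq_or_mem _ y with h | h
  · exact hy.trans h.ge
  · exact (hKN.mem_zip_Icompute_Jcompute h).2.1

theorem IsKN.eq_one_of_substL_eq_one (hKN : IsKN n col) (hone : 1 ∈ col) {y : ℕ}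
    (hy : substL n col y = 1) : y = 1 := by
  rcases applySubst_eq_or_mem _ y with h | h
  · exact h.symm.trans hy
  · have hfree := (hKN.mem_zip_Icompute_Jcompute h).2.2.2
    rw [show applySubst _ y = 1 from hy] at hfree
    exact absurd hone hfree

theorem IsKN.le_substR (hKN : IsKN n col) (y : ℕ) : y ≤ substR n col y := by
  rcases substR_eq_or n col y with h | ⟨pr, hpr, hy, h⟩
  · exact h.ge
  · have := hKN.mem_zip_Icompute_Jcompute hpr
    omega

theorem IsKN.substR_le (hKN : IsKN n col) {y : ℕ} (hy : y ≤ 2*n) : substR n col y ≤ 2*n := by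
  rcases substR_eq_or n col y with h | ⟨pr, hpr, -, h⟩
  · rwa [h]
  · have := hKN.mem_zip_Icompute_Jcompute hpr
    omega

theorem substR_one : substR n col 1 = 1 := by
  rcases substR_eq_or n col 1 with h | ⟨pr, hpr, h1, -⟩
  · exact h
  · have := mem_Icompute.1 (of_mem_zip hpr).1
    omega

theorem splitL_perm : splitL n col ~ col.map (substL n col) := sortList_perm _

theorem splitR_perm : splitR n col ~ col.map (substR n col) := sortList_perm _

theorem IsKN.splitL_bounds (hKN : IsKN n col) : ∀ x ∈ splitL n col, 1 ≤ x ∧ x ≤ 2*n := by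
  intro x hx
  obtain ⟨y, hy, rfl⟩ := mem_map.1 (splitL_perm.subset hx)
  have := hKN.2.1 y hy
  exact ⟨hKN.one_le_substL this.1, (hKN.substL_le y).trans this.2⟩

theorem IsKN.splitR_bounds (hKN : IsKN n col) : ∀ x ∈ splitR n col, 1 ≤ x ∧ x ≤ 2*n := by
  intro x hx
  obtain ⟨y, hy, rfl⟩ := mem_map.1 (splitR_perm.subset hx)
  have := hKN.2.1 y hy
  exact ⟨this.1.trans (hKN.le_substR y), hKN.substR_le this.2⟩

theorem IsKN.dominated_splitL_splitR (hKN : IsKN n col) :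
    CO.Dominated (splitL n col) (splitR n col) := by
  intro v
  rw [splitL_perm.countP_eq, splitR_perm.countP_eq]
  exact CO.dominated_map_of_le (fun y _ => (hKN.substL_le y).trans (hKN.le_substR y)) v

theorem IsKN.count_one_splitL_le (hKN : IsKN n col) (hone : 1 ∈ col) :
    (splitL n col).count 1 ≤ (splitR n col).count 1 := by
  rw [splitL_perm.count_eq, splitR_perm.count_eq, count_eq_countP, count_eq_countP,
    countP_map, countP_map]
  refine countP_mono_left fun y _ hy => ?_
  simp only [Function.comp_apply, beq_iff_eq] at hy ⊢
  rw [hKN.eq_one_of_substL_eq_one hone hy, substR_one]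

theorem IsKN.pairNoDescent (hKN : IsKN n col) {c : List ℕ} (hc : c.Subperm (splitL n col)) :
    CO.PairNoDescent col c (CO.reorderCol (2*n) c (splitR n col)) :=
  CO.pairNoDescent_reorderCol hKN.splitL_bounds hKN.splitR_bounds hKN.dominated_splitL_splitR
    hKN.count_one_splitL_le hc

theorem splitFilling_cons (col : List ℕ) (b : List (List ℕ)) :
    splitFilling n (col :: b) = splitL n col :: splitR n col :: splitFilling n b := by
  simp [splitFilling]

theorem pairNoDescent_circOrdGo : ∀ {b : List (List ℕ)} {prev : List ℕ},
    (∀ col ∈ b, IsKN n col) → ∀ j,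
      CO.PairNoDescent (b.getD j [])
        ((CO.circOrdGo (2*n) prev (splitFilling n b)).getD (2*j) [])
        ((CO.circOrdGo (2*n) prev (splitFilling n b)).getD (2*j+1) [])
  | [], _, _, j => by simp [CO.PairNoDescent, splitFilling, CO.circOrdGo]
  | col :: b, prev, hcols, j => by
    have hKN := hcols col mem_cons_self
    cases j with
    | zero => exact hKN.pairNoDescent (CO.reorderCol_subperm _ _ _)
    | succ j =>
      simpa [splitFilling_cons, CO.circOrdGo, Nat.mul_succ] using
        pairNoDescent_circOrdGo (fun c hc => hcols c (mem_cons_of_mem _ hc)) j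

end TC

theorem no_descent_in_split_pair_general (n : ℕ) (b : List (List ℕ))
    (hcols : ∀ col ∈ b, TC.IsKN n col) :
    ∀ j i, i < ((CO.circOrd (2*n) (TC.splitFilling n b)).getD (2*j+1) []).length →
      ((CO.circOrd (2*n) (TC.splitFilling n b)).getD (2*j) []).getD i 0 ≤
        ((CO.circOrd (2*n) (TC.splitFilling n b)).getD (2*j+1) []).getD i 0 ∧
      (1 ∈ b.getD j [] →
        ((CO.circOrd (2*n) (TC.splitFilling n b)).getD (2*j) []).getD i 0 = 1 →
        ((CO.circOrd (2*n) (TC.splitFilling n b)).getD (2*j+1) []).getD i 0 = 1) := by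
  intro j
  show CO.PairNoDescent _ _ _
  match b, j with
  | [], _ => simp [CO.PairNoDescent, TC.splitFilling, CO.circOrd]
  | col :: _, 0 => exact (hcols col mem_cons_self).pairNoDescent (Subperm.refl _)
  | _ :: _, j + 1 =>
    simpa [TC.splitFilling_cons, CO.circOrd, CO.circOrdGo, Nat.mul_succ] using
      TC.pairNoDescent_circOrdGo (fun c hc => hcols c (mem_cons_of_mem _ hc)) j

/-- within each split pair `c_j^L c_j^R` of the circularly reordered
split filling of a tensor product of KN columns there is no descent,
i.e. `c_j^L(i) ≤ c_j^R(i)`; consequently, if the column `b_j` contains the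
letter `1` and `c_j^L(i) = 1, then `c_j^R(i) = 1`. -/
theorem no_descent_in_split_pair (n : ℕ) (hn : 1 ≤ n) (b : List (List ℕ))
    (hcols : ∀ col ∈ b, TC.IsKN n col)
    (hdec : (b.map List.length).Chain' (· ≥ ·)) :
    ∀ j i, i < ((CO.circOrd (2*n) (TC.splitFilling n b)).getD (2*j+1) []).length →
      ((CO.circOrd (2*n) (TC.splitFilling n b)).getD (2*j) []).getD i 0 ≤
        ((CO.circOrd (2*n) (TC.splitFilling n b)).getD (2*j+1) []).getD i 0 ∧
      (1 ∈ b.getD j [] →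
        ((CO.circOrd (2*n) (TC.splitFilling n b)).getD (2*j) []).getD i 0 = 1 →
        ((CO.circOrd (2*n) (TC.splitFilling n b)).getD (2*j+1) []).getD i 0 = 1) :=
  no_descent_in_split_pair_general n b hcols
end
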